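/- Let W be the lazy random walk on a finite simple connected regular graph G = (V,E). Fix s, s', N, q ∈ ℕ with N ≥ s, s ≥ 6s', and 2s' ≥ q·t_mix + 1. Call ℓ a (2s')-local cut point of a path γ if R^γ([ℓ−2s', ℓ]) ∩ R^γ([ℓ+1, ℓ+2s']) = ∅. Then for every starting vertex ρ, the probability that every window [m, m+s], m ∈ [0, N−s], contains a (2s')-local cut point of W is at least 1 − (N−s+1)·( (q̄^G(2s'))^{⌊s/(6s')⌋} + s/(3·4^q·s') ), where q̄^G(2s') = (1/#V) Σ_ρ P_{(ρ,ρ)}(R^{W_1}([0,2s']) ∩ R^{W_2}([1,2s']) ≠ ∅) for two independent lazy walks started at the same vertex. -/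

import Mathlib

open Finset

variable {V : Type*} [Fintype V] [DecidableEq V] [Nonempty V]

/-- One-step transition kernel of the lazy random walk on `G`:
stay put with probability `1/2`, otherwise move to a uniformly chosen neighbour. -/
noncomputable def lazyStep (G : SimpleGraph V) [DecidableRel G.Adj] (x y : V) : ℝ :=
  if x = y then 1 / 2 else if G.Adj x y then 1 / (2 * (G.degree x : ℝ)) else 0

/-- `n`-step transition probabilities of the lazy random walk. -/
noncomputable def lazyProb (G : SimpleGraph V) [DecidableRel G.Adj] : ℕ → V → V → ℝ
  | 0, x, y => if x = y then 1 else 0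
  | n + 1, x, y => ∑ z : V, lazyStep G x z * lazyProb G n z y

/-- The stationary (degree-biased) distribution `π(x) = deg(x)/(2#E)`. -/
noncomputable def statDist (G : SimpleGraph V) [DecidableRel G.Adj] (x : V) : ℝ :=
  (G.degree x : ℝ) / (2 * (G.edgeFinset.card : ℝ))

/-- The uniform `(ℓ∞, 1/4)` mixing time. -/
noncomputable def tmix (G : SimpleGraph V) [DecidableRel G.Adj] : ℕ :=
  sInf {n : ℕ | ∀ x y : V, |lazyProb G n x y / statDist G y - 1| ≤ 1 / 4}

/-- Extension of a finite path to all of `ℕ` (constant after time `N`). -/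
def extPath (N : ℕ) (γ : Fin (N + 1) → V) : ℕ → V :=
  fun n => γ ⟨min n N, Nat.lt_succ_of_le (min_le_right n N)⟩

/-- Weight of a finite path under the lazy random walk kernel. -/
noncomputable def pathWeight (G : SimpleGraph V) [DecidableRel G.Adj]
    (N : ℕ) (γ : Fin (N + 1) → V) : ℝ :=
  ∏ i ∈ Finset.range N, lazyStep G (extPath N γ i) (extPath N γ (i + 1))

open Classical in
/-- Probability, for the lazy random walk started at `ρ`, of a path event
depending only on the first `N+1` coordinates. -/
noncomputable def walkProb (G : SimpleGraph V) [DecidableRel G.Adj]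
    (ρ : V) (N : ℕ) (E : (ℕ → V) → Prop) : ℝ :=
  ∑ γ : Fin (N + 1) → V,
    if extPath N γ 0 = ρ ∧ E (extPath N γ) then pathWeight G N γ else 0

open Classical in
/-- Expectation, for the lazy random walk started at `ρ`, of a path functional
depending only on the first `N+1` coordinates. -/
noncomputable def walkExp (G : SimpleGraph V) [DecidableRel G.Adj]
    (ρ : V) (N : ℕ) (f : (ℕ → V) → ℝ) : ℝ :=
  ∑ γ : Fin (N + 1) → V,
    if extPath N γ 0 = ρ then pathWeight G N γ * f (extPath N γ) else 0

open Classical in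
/-- Probability of a path event for the lazy random walk started from `π`. -/
noncomputable def walkProbStat (G : SimpleGraph V) [DecidableRel G.Adj]
    (N : ℕ) (E : (ℕ → V) → Prop) : ℝ :=
  ∑ γ : Fin (N + 1) → V,
    if E (extPath N γ) then statDist G (extPath N γ 0) * pathWeight G N γ else 0

/-- Expectation of a path functional for the lazy random walk started from `π`. -/
noncomputable def walkExpStat (G : SimpleGraph V) [DecidableRel G.Adj]
    (N : ℕ) (f : (ℕ → V) → ℝ) : ℝ :=
  ∑ γ : Fin (N + 1) → V,
    statDist G (extPath N γ 0) * pathWeight G N γ * f (extPath N γ)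

open Classical in
/-- Probability of a joint event for two independent lazy random walks,
each started from the stationary distribution. -/
noncomputable def twoWalkProbStat (G : SimpleGraph V) [DecidableRel G.Adj]
    (N : ℕ) (E : (ℕ → V) → (ℕ → V) → Prop) : ℝ :=
  ∑ γ₁ : Fin (N + 1) → V, ∑ γ₂ : Fin (N + 1) → V,
    if E (extPath N γ₁) (extPath N γ₂) then
      (statDist G (extPath N γ₁ 0) * pathWeight G N γ₁) *
      (statDist G (extPath N γ₂ 0) * pathWeight G N γ₂) else 0

open Classical in
/-- Probability of a joint event for two independent lazy random walks,
both started at the vertex `ρ`. -/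
noncomputable def twoWalkProbFrom (G : SimpleGraph V) [DecidableRel G.Adj]
    (ρ : V) (N : ℕ) (E : (ℕ → V) → (ℕ → V) → Prop) : ℝ :=
  ∑ γ₁ : Fin (N + 1) → V, ∑ γ₂ : Fin (N + 1) → V,
    if extPath N γ₁ 0 = ρ ∧ extPath N γ₂ 0 = ρ ∧ E (extPath N γ₁) (extPath N γ₂) then
      pathWeight G N γ₁ * pathWeight G N γ₂ else 0

/-- Range of a path over a finite set of times. -/
def walkRange (w : ℕ → V) (A : Finset ℕ) : Finset V := A.image w

/-- `q̄^G(s)`: averaged intersection probability of two independent lazy walks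
started at the same (uniform) vertex. -/
noncomputable def qbar (G : SimpleGraph V) [DecidableRel G.Adj] (s : ℕ) : ℝ :=
  (1 / (Fintype.card V : ℝ)) * ∑ ρ : V,
    twoWalkProbFrom G ρ s (fun w₁ w₂ =>
      (walkRange w₁ (Finset.Icc 0 s) ∩ walkRange w₂ (Finset.Icc 1 s)).Nonempty)

/-- `H^W_ρ(m) = Σ_{i=0}^m Σ_{j=0}^m P_ρ(W(i+j)=ρ)`. -/
noncomputable def HW (G : SimpleGraph V) [DecidableRel G.Adj] (ρ : V) (m : ℕ) : ℝ :=
  ∑ i ∈ Finset.range (m + 1), ∑ j ∈ Finset.range (m + 1), lazyProb G (i + j) ρ ρ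

/-!
Union bound over the `N - s + 1` windows. In the window starting at `m`, consider the
`k = ⌊s / 6s'⌋` candidate times `m + 6s'j + 4s'`, each in the middle of its own block
`[m + 6s'j, m + 6s'(j + 1)]`. By the Markov property, given the past the walk first spends
`2s' ≥ q t_mix` steps in the block, which brings it `4⁻ᵠ`-close to uniform; started from the
uniform distribution, the candidate fails to be a `2s'`-local cut point with probability
exactly `q̄(2s')`, by reversing the walk on the first half of the segment around it.
Chaining the blocks, no candidate of the window is a cut point with probability at most
`q̄(2s')^k + k 4⁻ᵠ`. Closeness to uniform after `q t_mix` steps is submultiplicativity of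
the `ℓ∞` distance to uniform; that the set whose infimum defines `t_mix` is nonempty (so
that `t_mix` is not the junk value `0`) is Doeblin's argument on a connected graph.
-/

section Paths

variable {V : Type*}

lemma extPath_zero (N : ℕ) (γ : Fin (N + 1) → V) : extPath N γ 0 = γ 0 := by
  simp [extPath]

lemma extPath_cons (N : ℕ) (v : V) (γ : Fin (N + 1) → V) :
    extPath (N + 1) (Fin.cons v γ) = Stream'.cons v (extPath N γ) := by
  funext n
  cases n with
  | zero => simp [extPath]; rfl
  | succ n =>
    change (Fin.cons v γ : Fin (N + 2) → V) ⟨min (n + 1) (N + 1), _⟩ = γ ⟨min n N, _⟩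
    simp only [Nat.succ_min_succ]
    exact Fin.cons_succ (α := fun _ => V) v γ ⟨min n N, _⟩

lemma extPath_comp_rev (N : ℕ) (γ : Fin (N + 1) → V) :
    extPath N (γ ∘ Fin.rev) = fun i => extPath N γ (N - i) := by
  funext i
  simp only [extPath, Function.comp_apply]
  congr 1
  ext
  simp only [Fin.val_rev]
  omega

lemma DependsOn.comp_shift {β : Type*} {C : (ℕ → V) → β} {M : ℕ} (hC : DependsOn C (Set.Iic M))
    (t : ℕ) : DependsOn (fun w : ℕ → V => C (fun i => w (i + t))) (Set.Iic (M + t)) :=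
  fun w w' h => hC fun i hi => h _ (by simp only [Set.mem_Iic] at hi ⊢; omega)

lemma dependsOn_forall_shift {C : (ℕ → V) → Prop} {M : ℕ} (hC : DependsOn C (Set.Iic M))
    (m r : ℕ) :
    DependsOn (fun w : ℕ → V => ∀ j < r, C (fun i => w (i + (m + M * j))))
      (Set.Iic (m + M * r)) := fun w w' h => propext <| forall₂_congr fun j hj => by
  have : M * (j + 1) ≤ M * r := Nat.mul_le_mul_left M hj
  rw [mul_add_one] at this
  exact ((hC.comp_shift _).mono (Set.Iic_subset_Iic.2 (by omega)) h).to_iff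

end Paths

section LazyWalk

variable {V : Type*} [Fintype V] {G : SimpleGraph V} [DecidableRel G.Adj] {d : ℕ}

lemma SimpleGraph.IsRegularOfDegree.degree_pos (hreg : G.IsRegularOfDegree d) (hd : 0 < d)
    (x : V) : 0 < G.degree x :=
  hreg.degree_eq x ▸ hd

lemma statDist_eq_inv_card (hreg : G.IsRegularOfDegree d) (hd : 0 < d) (y : V) :
    statDist G y = (Fintype.card V : ℝ)⁻¹ := by
  have hedges : (2 * G.edgeFinset.card : ℝ) = Fintype.card V * d := by
    exact_mod_cast G.sum_degrees_eq_twice_card_edges.symm.trans (by simp [hreg _])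
  have : (d : ℝ) ≠ 0 := by positivity
  rw [statDist, hedges, hreg y]
  field_simp

variable [DecidableEq V]

noncomputable def lazyMatrix (G : SimpleGraph V) [DecidableRel G.Adj] : Matrix V V ℝ :=
  Matrix.of (lazyStep G)

lemma lazyStep_nonneg (x y : V) : 0 ≤ lazyStep G x y := by
  unfold lazyStep
  split_ifs <;> positivity

lemma lazyStep_symm (hreg : G.IsRegularOfDegree d) (x y : V) :
    lazyStep G x y = lazyStep G y x := by
  unfold lazyStep
  rcases eq_or_ne x y with rfl | hxy
  · rfl
  · simp [hxy, hxy.symm, G.adj_comm, hreg x, hreg y]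

lemma sum_lazyStep {x : V} (hx : 0 < G.degree x) : ∑ y, lazyStep G x y = 1 := by
  have hsplit : ∀ y, lazyStep G x y =
      (if x = y then 1 / 2 else 0) + (if G.Adj x y then 1 / (2 * (G.degree x : ℝ)) else 0) := by
    intro y
    unfold lazyStep
    rcases eq_or_ne x y with rfl | hxy <;> simp [*]
  rw [Finset.sum_congr rfl fun y _ => hsplit y, sum_add_distrib, sum_ite_eq, sum_ite,
    sum_const_zero, add_zero, sum_const, ← SimpleGraph.neighborFinset_eq_filter,
    SimpleGraph.card_neighborFinset_eq_degree, nsmul_eq_mul]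
  field_simp
  norm_num

lemma lazyProb_succ (n : ℕ) (x y : V) :
    lazyProb G (n + 1) x y = ∑ z, lazyStep G x z * lazyProb G n z y := rfl

lemma lazyProb_nonneg (n : ℕ) (x y : V) : 0 ≤ lazyProb G n x y := by
  induction n generalizing x with
  | zero => unfold lazyProb; split_ifs <;> norm_num
  | succ n ih => exact sum_nonneg fun z _ => mul_nonneg (lazyStep_nonneg _ _) (ih _)

lemma lazyProb_eq_pow (n : ℕ) (x y : V) : lazyProb G n x y = (lazyMatrix G ^ n) x y := by
  induction n generalizing x with
  | zero => simp [lazyProb, Matrix.one_apply]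
  | succ n ih => simp [lazyProb_succ, pow_succ', Matrix.mul_apply, ih, lazyMatrix]

lemma lazyProb_add (m n : ℕ) (x y : V) :
    lazyProb G (m + n) x y = ∑ z, lazyProb G m x z * lazyProb G n z y := by
  simp only [lazyProb_eq_pow, pow_add, Matrix.mul_apply]

lemma lazyMatrix_mem_rowStochastic (hdeg : ∀ x, 0 < G.degree x) :
    lazyMatrix G ∈ Matrix.rowStochastic ℝ V :=
  Matrix.mem_rowStochastic_iff_sum.2 ⟨lazyStep_nonneg, fun x => sum_lazyStep (hdeg x)⟩

lemma lazyMatrix_mem_doublyStochastic (hreg : G.IsRegularOfDegree d) (hd : 0 < d) :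
    lazyMatrix G ∈ doublyStochastic ℝ V := by
  have hdeg := hreg.degree_pos hd
  refine mem_doublyStochastic_iff_sum.2 ⟨lazyStep_nonneg, fun x => sum_lazyStep (hdeg x),
    fun y => ?_⟩
  simp only [lazyMatrix, Matrix.of_apply, lazyStep_symm hreg _ y]
  exact sum_lazyStep (hdeg y)

lemma sum_lazyProb (hdeg : ∀ x, 0 < G.degree x) (n : ℕ) (x : V) : ∑ y, lazyProb G n x y = 1 := by
  simp only [lazyProb_eq_pow]
  exact Matrix.sum_row_of_mem_rowStochastic
    (pow_mem (lazyMatrix_mem_rowStochastic hdeg) n) x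

lemma sum_lazyProb_left (hreg : G.IsRegularOfDegree d) (hd : 0 < d) (n : ℕ) (y : V) :
    ∑ x, lazyProb G n x y = 1 := by
  simp only [lazyProb_eq_pow]
  exact sum_col_of_mem_doublyStochastic (pow_mem (lazyMatrix_mem_doublyStochastic hreg hd) n) y

lemma lazyProb_add_sub_inv_card (hreg : G.IsRegularOfDegree d) (hd : 0 < d) (α : ℝ)
    (s t : ℕ) (x y : V) :
    lazyProb G (s + t) x y - (Fintype.card V : ℝ)⁻¹ =
      ∑ z, (lazyProb G s x z - α) * (lazyProb G t z y - (Fintype.card V : ℝ)⁻¹) := by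
  have hn : (Fintype.card V : ℝ) ≠ 0 := by
    have := Fintype.card_pos_iff.2 ⟨x⟩; positivity
  simp only [sub_mul, mul_sub, sum_sub_distrib, ← sum_mul, ← mul_sum, ← lazyProb_add,
    sum_lazyProb (hreg.degree_pos hd), sum_lazyProb_left hreg hd, sum_const, card_univ,
    nsmul_eq_mul]
  field_simp
  ring

lemma abs_lazyProb_add_sub_inv_card_le (hreg : G.IsRegularOfDegree d) (hd : 0 < d)
    {t : ℕ} {y : V} {c : ℝ} (hc : ∀ z, |lazyProb G t z y - (Fintype.card V : ℝ)⁻¹| ≤ c)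
    (α : ℝ) (s : ℕ) (x : V) :
    |lazyProb G (s + t) x y - (Fintype.card V : ℝ)⁻¹| ≤
      (∑ z, |lazyProb G s x z - α|) * c := by
  rw [lazyProb_add_sub_inv_card hreg hd α, sum_mul]
  refine (abs_sum_le_sum_abs _ _).trans (sum_le_sum fun z _ => ?_)
  rw [abs_mul]
  exact mul_le_mul_of_nonneg_left (hc z) (abs_nonneg _)

lemma inv_pow_le_lazyProb_of_walk (hreg : G.IsRegularOfDegree d) (hd : 0 < d) {x y : V}
    (p : G.Walk x y) {t : ℕ} (ht : p.length ≤ t) :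
    ((2 * d : ℝ)⁻¹) ^ t ≤ lazyProb G t x y := by
  have hstep : ∀ {u v : V}, (u = v ∨ G.Adj u v) → (2 * d : ℝ)⁻¹ ≤ lazyStep G u v := by
    rintro u v (rfl | huv)
    · have : (1 : ℝ) ≤ d := by exact_mod_cast hd
      simp only [lazyStep, if_true]
      rw [inv_le_comm₀ (by positivity) (by norm_num)]
      linarith
    · simp [lazyStep, huv.ne, huv, hreg u]
  induction t generalizing x with
  | zero =>
    obtain rfl := SimpleGraph.Walk.eq_of_length_eq_zero (Nat.le_zero.1 ht)
    simp [lazyProb]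
  | succ t ih =>
    obtain ⟨z, hz, q, hq⟩ : ∃ z, (x = z ∨ G.Adj x z) ∧ ∃ q : G.Walk z y, q.length ≤ t := by
      cases p with
      | nil => exact ⟨_, Or.inl rfl, .nil, Nat.zero_le _⟩
      | cons h q => exact ⟨_, Or.inr h, q, by simpa using ht⟩
    calc ((2 * d : ℝ)⁻¹) ^ (t + 1) = (2 * d : ℝ)⁻¹ * ((2 * d : ℝ)⁻¹) ^ t := pow_succ' _ _
      _ ≤ lazyStep G x z * lazyProb G t z y :=
        mul_le_mul (hstep hz) (ih q hq) (by positivity) (lazyStep_nonneg _ _)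
      _ ≤ lazyProb G (t + 1) x y :=
        single_le_sum (f := fun z => lazyStep G x z * lazyProb G t z y)
          (fun z _ => mul_nonneg (lazyStep_nonneg _ _) (lazyProb_nonneg _ _ _)) (mem_univ z)

lemma exists_forall_inv_pow_le_lazyProb (hconn : G.Connected) (hreg : G.IsRegularOfDegree d)
    (hd : 0 < d) : ∃ T, ∀ x y : V, ((2 * d : ℝ)⁻¹) ^ T ≤ lazyProb G T x y := by
  have := hconn.nonempty
  refine ⟨G.diam, fun x y => ?_⟩
  obtain ⟨p, hp⟩ := hconn.exists_walk_length_eq_dist x y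
  exact inv_pow_le_lazyProb_of_walk hreg hd p
    (hp ▸ G.dist_le_diam (SimpleGraph.connected_iff_ediam_ne_top.1 hconn))

lemma abs_lazyProb_mul_sub_inv_card_le (hreg : G.IsRegularOfDegree d) (hd : 0 < d)
    {T : ℕ} {δ : ℝ} (hδ : ∀ x y, δ ≤ lazyProb G T x y) (j : ℕ) (x y : V) :
    |lazyProb G (j * T) x y - (Fintype.card V : ℝ)⁻¹| ≤ (1 - Fintype.card V * δ) ^ j := by
  induction j generalizing x with
  | zero =>
    have hn : (1 : ℝ) ≤ Fintype.card V := by exact_mod_cast Fintype.card_pos_iff.2 ⟨x⟩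
    have : (Fintype.card V : ℝ)⁻¹ ≤ 1 := inv_le_one_of_one_le₀ hn
    rw [abs_le]
    simp only [zero_mul, lazyProb, pow_zero]
    split_ifs <;> constructor <;> linarith [inv_pos.2 (zero_lt_one.trans_le hn)]
  | succ j ih =>
    rw [Nat.succ_mul, add_comm, pow_succ']
    refine (abs_lazyProb_add_sub_inv_card_le hreg hd (fun z => ih z) δ T x).trans_eq ?_
    simp only [fun z => abs_of_nonneg (sub_nonneg.2 (hδ x z)), sum_sub_distrib,
      sum_lazyProb (hreg.degree_pos hd), sum_const, card_univ, nsmul_eq_mul]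

lemma abs_lazyProb_tmix_sub_inv_card_le (hconn : G.Connected) (hreg : G.IsRegularOfDegree d)
    (hd : 0 < d) (x y : V) :
    |lazyProb G (tmix G) x y - (Fintype.card V : ℝ)⁻¹| ≤ 4⁻¹ * (Fintype.card V : ℝ)⁻¹ := by
  have hn : (0 : ℝ) < Fintype.card V := by exact_mod_cast Fintype.card_pos_iff.2 ⟨x⟩
  have hiff : ∀ t, (∀ x y : V, |lazyProb G t x y / statDist G y - 1| ≤ 1 / 4) ↔
      ∀ x y : V, |lazyProb G t x y - (Fintype.card V : ℝ)⁻¹| ≤ 4⁻¹ * (Fintype.card V : ℝ)⁻¹ := by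
    intro t
    refine forall₂_congr fun x y => ?_
    have : lazyProb G t x y / statDist G y - 1 =
        Fintype.card V * (lazyProb G t x y - (Fintype.card V : ℝ)⁻¹) := by
      rw [statDist_eq_inv_card hreg hd]
      field_simp
    rw [this, abs_mul, abs_of_pos hn, ← le_div_iff₀' hn]
    ring_nf
  obtain ⟨T, hT⟩ := exists_forall_inv_pow_le_lazyProb hconn hreg hd
  set δ : ℝ := ((2 * d : ℝ)⁻¹) ^ T
  have hδ : 0 < δ := by positivity
  have hnδ : Fintype.card V * δ ≤ 1 := by
    simpa [← sum_lazyProb (hreg.degree_pos hd) T x] using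
      sum_le_sum fun y (_ : y ∈ univ) => hT x y
  obtain ⟨j, hj⟩ := exists_pow_lt_of_lt_one (by positivity : 0 < 4⁻¹ * (Fintype.card V : ℝ)⁻¹)
    (by nlinarith : 1 - Fintype.card V * δ < 1)
  have hne : {t | ∀ x y : V, |lazyProb G t x y / statDist G y - 1| ≤ 1 / 4}.Nonempty :=
    ⟨j * T, (hiff _).2 fun x y =>
      (abs_lazyProb_mul_sub_inv_card_le hreg hd hT j x y).trans hj.le⟩
  exact (hiff _).1 (Nat.sInf_mem hne) x y

lemma abs_lazyProb_mul_tmix_sub_inv_card_le (hconn : G.Connected)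
    (hreg : G.IsRegularOfDegree d) (hd : 0 < d) (q : ℕ) (x y : V) :
    |lazyProb G ((q + 1) * tmix G) x y - (Fintype.card V : ℝ)⁻¹| ≤
      (4 ^ (q + 1))⁻¹ * (Fintype.card V : ℝ)⁻¹ := by
  induction q generalizing x with
  | zero => simpa using abs_lazyProb_tmix_sub_inv_card_le hconn hreg hd x y
  | succ q ih =>
    have hn : (0 : ℝ) < Fintype.card V := by exact_mod_cast Fintype.card_pos_iff.2 ⟨x⟩
    rw [Nat.succ_mul, add_comm]
    refine (abs_lazyProb_add_sub_inv_card_le hreg hd ih (Fintype.card V : ℝ)⁻¹ _ x).trans ?_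
    calc (∑ z, |lazyProb G (tmix G) x z - (Fintype.card V : ℝ)⁻¹|) *
          ((4 ^ (q + 1))⁻¹ * (Fintype.card V : ℝ)⁻¹)
        ≤ (∑ _z : V, 4⁻¹ * (Fintype.card V : ℝ)⁻¹) *
          ((4 ^ (q + 1))⁻¹ * (Fintype.card V : ℝ)⁻¹) := by
          gcongr with z
          exact abs_lazyProb_tmix_sub_inv_card_le hconn hreg hd x z
      _ = (4 ^ (q + 1 + 1))⁻¹ * (Fintype.card V : ℝ)⁻¹ := by
          simp only [sum_const, card_univ, nsmul_eq_mul]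
          field_simp
          ring

lemma abs_lazyProb_sub_inv_card_le (hconn : G.Connected) (hreg : G.IsRegularOfDegree d)
    (hd : 0 < d) {q t : ℕ} (hq : 0 < q) (ht : q * tmix G ≤ t) (x y : V) :
    |lazyProb G t x y - (Fintype.card V : ℝ)⁻¹| ≤ (4 ^ q)⁻¹ * (Fintype.card V : ℝ)⁻¹ := by
  obtain ⟨q, rfl⟩ := Nat.exists_eq_add_one_of_ne_zero hq.ne'
  rw [← Nat.sub_add_cancel ht]
  refine (abs_lazyProb_add_sub_inv_card_le hreg hd
    (abs_lazyProb_mul_tmix_sub_inv_card_le hconn hreg hd q · y) 0 _ x).trans_eq ?_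
  simp [abs_of_nonneg (lazyProb_nonneg _ _ _), sum_lazyProb (hreg.degree_pos hd)]

lemma sum_lazyProb_mul_le (hconn : G.Connected) (hreg : G.IsRegularOfDegree d) (hd : 0 < d)
    {q t : ℕ} (ht : q * tmix G ≤ t) {g : V → ℝ} (hg0 : ∀ y, 0 ≤ g y) (hg1 : ∀ y, g y ≤ 1)
    (x : V) :
    ∑ y, lazyProb G t x y * g y ≤ (Fintype.card V : ℝ)⁻¹ * ∑ y, g y + (4 ^ q)⁻¹ := by
  have hdeg := hreg.degree_pos hd
  have hsum : 0 ≤ (Fintype.card V : ℝ)⁻¹ * ∑ y, g y :=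
    mul_nonneg (by positivity) (sum_nonneg fun y _ => hg0 y)
  rcases Nat.eq_zero_or_pos q with rfl | hq
  · calc ∑ y, lazyProb G t x y * g y ≤ ∑ y, lazyProb G t x y :=
          sum_le_sum fun y _ => mul_le_of_le_one_right (lazyProb_nonneg _ _ _) (hg1 y)
      _ ≤ _ := by rw [sum_lazyProb hdeg]; simpa using hsum
  · have hn : (0 : ℝ) < Fintype.card V := by exact_mod_cast Fintype.card_pos_iff.2 ⟨x⟩
    calc ∑ y, lazyProb G t x y * g y
        ≤ ∑ y, ((Fintype.card V : ℝ)⁻¹ + (4 ^ q)⁻¹ * (Fintype.card V : ℝ)⁻¹) * g y := by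
          gcongr with y
          · exact hg0 y
          · linarith [(abs_le.1 (abs_lazyProb_sub_inv_card_le hconn hreg hd hq ht x y)).2]
      _ ≤ (Fintype.card V : ℝ)⁻¹ * ∑ y, g y +
            (4 ^ q)⁻¹ * (Fintype.card V : ℝ)⁻¹ * ∑ _y : V, 1 := by
          simp only [add_mul, sum_add_distrib, ← mul_sum]
          gcongr with y
          exact hg1 y
      _ = (Fintype.card V : ℝ)⁻¹ * ∑ y, g y + (4 ^ q)⁻¹ := by
          simp [hn.ne']

lemma pathWeight_nonneg (N : ℕ) (γ : Fin (N + 1) → V) : 0 ≤ pathWeight G N γ :=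
  prod_nonneg fun _ _ => lazyStep_nonneg _ _

lemma pathWeight_cons (N : ℕ) (v : V) (γ : Fin (N + 1) → V) :
    pathWeight G (N + 1) (Fin.cons v γ) = lazyStep G v (γ 0) * pathWeight G N γ := by
  rw [pathWeight, prod_range_succ', extPath_cons, mul_comm]
  simp [Stream'.cons, pathWeight, extPath_zero]

lemma pathWeight_comp_rev (hreg : G.IsRegularOfDegree d) (N : ℕ) (γ : Fin (N + 1) → V) :
    pathWeight G N (γ ∘ Fin.rev) = pathWeight G N γ := by
  rw [pathWeight, pathWeight, extPath_comp_rev, ← prod_range_reflect]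
  refine prod_congr rfl fun i hi => ?_
  rw [lazyStep_symm hreg]
  have := mem_range.1 hi
  dsimp only
  congr 2 <;> omega

lemma walkExp_eq_sum (ρ : V) (N : ℕ) (f : (ℕ → V) → ℝ) :
    walkExp G ρ N f =
      ∑ γ : Fin (N + 1) → V, (if γ 0 = ρ then pathWeight G N γ else 0) * f (extPath N γ) := by
  simp only [walkExp, extPath_zero, ite_mul, zero_mul]

lemma walkExp_zero (ρ : V) (f : (ℕ → V) → ℝ) : walkExp G ρ 0 f = f (fun _ => ρ) := by
  have : ∀ γ : Fin 1 → V, extPath 0 γ = fun _ => γ 0 := fun γ => by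
    funext i; simp [extPath, Fin.fin_one_eq_zero]
  rw [walkExp_eq_sum, ← (Equiv.funUnique (Fin 1) V).symm.sum_comp]
  simp [this, pathWeight]

lemma walkExp_succ (ρ : V) (N : ℕ) (f : (ℕ → V) → ℝ) :
    walkExp G ρ (N + 1) f =
      ∑ v, lazyStep G ρ v * walkExp G v N (fun w => f (Stream'.cons ρ w)) := by
  simp only [walkExp_eq_sum, mul_sum]
  rw [← (Fin.consEquiv fun _ => V).sum_comp, Fintype.sum_prod_type]
  simp only [Fin.consEquiv, Equiv.coe_fn_mk, Fin.cons_zero, extPath_cons, pathWeight_cons]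
  rw [Fintype.sum_eq_single ρ fun v hv => by simp [hv], sum_comm]
  simp only [if_true, mul_ite, mul_zero, ite_mul, zero_mul, sum_ite_eq, mem_univ, mul_assoc]

lemma walkExp_congr {ρ : V} {N : ℕ} {f g : (ℕ → V) → ℝ} (h : ∀ w, w 0 = ρ → f w = g w) :
    walkExp G ρ N f = walkExp G ρ N g := by
  simp only [walkExp_eq_sum]
  refine sum_congr rfl fun γ _ => ?_
  split_ifs with hγ
  · rw [h _ ((extPath_zero N γ).trans hγ)]
  · simp

lemma walkExp_mono {ρ : V} {N : ℕ} {f g : (ℕ → V) → ℝ} (h : ∀ w, f w ≤ g w) :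
    walkExp G ρ N f ≤ walkExp G ρ N g := by
  simp only [walkExp_eq_sum]
  refine sum_le_sum fun γ _ => mul_le_mul_of_nonneg_left (h _) ?_
  split_ifs
  exacts [pathWeight_nonneg _ _, le_rfl]

lemma walkExp_sum {ι : Type*} (s : Finset ι) (ρ : V) (N : ℕ) (f : ι → (ℕ → V) → ℝ) :
    walkExp G ρ N (fun w => ∑ i ∈ s, f i w) = ∑ i ∈ s, walkExp G ρ N (f i) := by
  simp only [walkExp_eq_sum, mul_sum]
  exact sum_comm

lemma walkExp_add (ρ : V) (N : ℕ) (f g : (ℕ → V) → ℝ) :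
    walkExp G ρ N (fun w => f w + g w) = walkExp G ρ N f + walkExp G ρ N g := by
  simp only [walkExp_eq_sum, mul_add, sum_add_distrib]

lemma walkExp_mul_const (ρ : V) (N : ℕ) (f : (ℕ → V) → ℝ) (c : ℝ) :
    walkExp G ρ N (fun w => f w * c) = walkExp G ρ N f * c := by
  simp only [walkExp_eq_sum, sum_mul, mul_assoc]

lemma walkExp_endpoint (ρ : V) (N : ℕ) (g : V → ℝ) :
    walkExp G ρ N (fun w => g (w N)) = ∑ y, lazyProb G N ρ y * g y := by
  induction N generalizing ρ with
  | zero => simp [walkExp_zero, lazyProb]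
  | succ N ih =>
    simp only [walkExp_succ, lazyProb_succ, sum_mul, mul_assoc]
    rw [sum_comm]
    exact sum_congr rfl fun v _ => by rw [← mul_sum, ← ih]; rfl

lemma walkExp_const (hdeg : ∀ x, 0 < G.degree x) (ρ : V) (N : ℕ) (c : ℝ) :
    walkExp G ρ N (fun _ => c) = c := by
  rw [walkExp_endpoint ρ N (fun _ => c), ← sum_mul, sum_lazyProb hdeg, one_mul]

lemma walkExp_markov {T : ℕ} {F : (ℕ → V) → (ℕ → V) → ℝ} (hF : DependsOn F (Set.Iic T))
    (ρ : V) (M : ℕ) :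
    walkExp G ρ (T + M) (fun w => F w (fun i => w (i + T))) =
      walkExp G ρ T (fun w => walkExp G (w T) M (F w)) := by
  induction T generalizing ρ F with
  | zero =>
    rw [zero_add, walkExp_zero]
    refine walkExp_congr fun w hw => ?_
    exact congrFun (hF fun i hi => Nat.le_zero.1 hi ▸ hw) w
  | succ T ih =>
    rw [show T + 1 + M = T + M + 1 by omega, walkExp_succ, walkExp_succ]
    refine sum_congr rfl fun v _ => congrArg _ ?_
    refine ih (F := fun w => F (Stream'.cons ρ w)) (fun w w' h => hF fun i hi => ?_) v
    cases i with
    | zero => rfl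
    | succ i => exact h i (Nat.le_of_succ_le_succ hi)

lemma sum_walkExp_eq (N : ℕ) (f : (ℕ → V) → ℝ) :
    ∑ ρ, walkExp G ρ N f = ∑ γ : Fin (N + 1) → V, pathWeight G N γ * f (extPath N γ) := by
  simp only [walkExp_eq_sum]
  rw [sum_comm]
  simp [ite_mul]

lemma sum_walkExp_reverse (hreg : G.IsRegularOfDegree d) (N : ℕ) (f : (ℕ → V) → ℝ) :
    ∑ ρ, walkExp G ρ N (fun w => f (fun i => w (N - i))) = ∑ ρ, walkExp G ρ N f := by
  rw [sum_walkExp_eq, sum_walkExp_eq]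
  have hinv : Function.Involutive fun γ : Fin (N + 1) → V => γ ∘ Fin.rev := fun γ => by
    funext i; simp
  refine Fintype.sum_bijective _ hinv.bijective _ _ fun γ => ?_
  rw [pathWeight_comp_rev hreg, extPath_comp_rev]

open Classical in
lemma walkProb_eq_walkExp (ρ : V) (N : ℕ) (E : (ℕ → V) → Prop) :
    walkProb G ρ N E = walkExp G ρ N (fun w => if E w then 1 else 0) := by
  simp only [walkProb, walkExp, ite_and, mul_ite, mul_one, mul_zero]

lemma walkProb_nonneg (ρ : V) (N : ℕ) (E : (ℕ → V) → Prop) : 0 ≤ walkProb G ρ N E :=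
  sum_nonneg fun γ _ => by split_ifs <;> simp [pathWeight_nonneg]

lemma walkProb_mono {ρ : V} {N : ℕ} {E E' : (ℕ → V) → Prop} (h : ∀ w, E w → E' w) :
    walkProb G ρ N E ≤ walkProb G ρ N E' := by
  classical
  simp only [walkProb_eq_walkExp]
  refine walkExp_mono fun w => ?_
  by_cases hE : E w
  · simp [hE, h w hE]
  · simp only [hE, if_false]
    split_ifs <;> norm_num

lemma walkProb_not (hdeg : ∀ x, 0 < G.degree x) (ρ : V) (N : ℕ) (E : (ℕ → V) → Prop) :
    walkProb G ρ N (fun w => ¬ E w) = 1 - walkProb G ρ N E := by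
  classical
  simp only [walkProb_eq_walkExp]
  rw [eq_sub_iff_add_eq, ← walkExp_add]
  refine (walkExp_congr fun w _ => ?_).trans (walkExp_const hdeg ρ N 1)
  by_cases hE : E w <;> simp [hE]

lemma walkProb_true (hdeg : ∀ x, 0 < G.degree x) (ρ : V) (N : ℕ) :
    walkProb G ρ N (fun _ => True) = 1 := by
  simp [walkProb_eq_walkExp, walkExp_const hdeg]

lemma walkProb_le_one (hdeg : ∀ x, 0 < G.degree x) (ρ : V) (N : ℕ) (E : (ℕ → V) → Prop) :
    walkProb G ρ N E ≤ 1 :=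
  (walkProb_mono fun _ _ => trivial).trans_eq (walkProb_true hdeg ρ N)

lemma walkProb_exists_le_sum {ι : Type*} (S : Finset ι) (ρ : V) (N : ℕ)
    (P : ι → (ℕ → V) → Prop) :
    walkProb G ρ N (fun w => ∃ i ∈ S, P i w) ≤ ∑ i ∈ S, walkProb G ρ N (P i) := by
  classical
  simp only [walkProb_eq_walkExp, ← walkExp_sum]
  refine walkExp_mono fun w => ?_
  split_ifs with h
  · obtain ⟨i, hi, hPi⟩ := h
    exact (single_le_sum (fun j _ => by split_ifs <;> norm_num) hi).trans' (by simp [hPi])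
  · exact sum_nonneg fun j _ => by split_ifs <;> norm_num

lemma walkProb_markov {T : ℕ} {E : (ℕ → V) → (ℕ → V) → Prop} (hE : DependsOn E (Set.Iic T))
    (ρ : V) (M : ℕ) :
    walkProb G ρ (T + M) (fun w => E w (fun i => w (i + T))) =
      walkExp G ρ T (fun w => walkProb G (w T) M (E w)) := by
  classical
  simp only [walkProb_eq_walkExp]
  exact walkExp_markov (F := fun w u => if E w u then 1 else 0)
    (fun w w' h => by simp only [hE h]) ρ M

lemma one_sub_sum_le_walkProb_forall (hdeg : ∀ x, 0 < G.degree x) {ι : Type*} (S : Finset ι)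
    (ρ : V) (N : ℕ) (P : ι → (ℕ → V) → Prop) :
    1 - ∑ i ∈ S, walkProb G ρ N (fun w => ¬ P i w) ≤
      walkProb G ρ N (fun w => ∀ i ∈ S, P i w) := by
  have hunion := walkProb_exists_le_sum (G := G) S ρ N (fun i w => ¬ P i w)
  have hcompl : walkProb G ρ N (fun w => ¬ ∀ i ∈ S, P i w) ≤
      walkProb G ρ N (fun w => ∃ i ∈ S, ¬ P i w) := walkProb_mono fun w h => by simpa using h
  linarith [walkProb_not hdeg ρ N (fun w => ∀ i ∈ S, P i w)]

lemma walkProb_eq_of_dependsOn (hdeg : ∀ x, 0 < G.degree x) {A : (ℕ → V) → Prop} {T N : ℕ}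
    (hA : DependsOn A (Set.Iic T)) (hTN : T ≤ N) (ρ : V) :
    walkProb G ρ N A = walkProb G ρ T A := by
  obtain ⟨M, rfl⟩ := Nat.exists_eq_add_of_le hTN
  rw [walkProb_markov (E := fun w _ => A w) (fun w w' h => by simp only [hA h]) ρ M,
    walkProb_eq_walkExp]
  refine walkExp_congr fun w _ => ?_
  classical
  by_cases hw : A w
  · simp [hw, walkProb_true hdeg]
  · simp [hw, walkProb]

lemma walkProb_and_shift_le {A C : (ℕ → V) → Prop} {T M : ℕ} {p : ℝ}
    (hA : DependsOn A (Set.Iic T)) (hC : ∀ x, walkProb G x M C ≤ p) (ρ : V) :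
    walkProb G ρ (T + M) (fun w => A w ∧ C (fun i => w (i + T))) ≤ walkProb G ρ T A * p := by
  classical
  rw [walkProb_markov (E := fun w u => A w ∧ C u) (fun w w' h => by simp only [hA h]) ρ M,
    walkProb_eq_walkExp, ← walkExp_mul_const]
  refine walkExp_mono fun w => ?_
  by_cases hw : A w
  · simpa [hw] using hC (w T)
  · simp [hw, walkProb]

lemma walkProb_forall_shift_le (hdeg : ∀ x, 0 < G.degree x) {C : (ℕ → V) → Prop} {M : ℕ}
    (hC : DependsOn C (Set.Iic M)) {a ε : ℝ} (ha0 : 0 ≤ a) (ha1 : a ≤ 1) (hε : 0 ≤ ε)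
    (hCp : ∀ x, walkProb G x M C ≤ a + ε) (ρ : V) (m r : ℕ) :
    walkProb G ρ (m + M * r) (fun w => ∀ j < r, C (fun i => w (i + (m + M * j)))) ≤
      a ^ r + r * ε := by
  induction r with
  | zero => simpa using walkProb_le_one hdeg ρ (m + M * 0) _
  | succ r ih =>
    set A : (ℕ → V) → Prop := fun w => ∀ j < r, C (fun i => w (i + (m + M * j)))
    have hP1 := walkProb_le_one hdeg ρ (m + M * r) A
    calc walkProb G ρ (m + M * (r + 1)) (fun w => ∀ j < r + 1, C (fun i => w (i + (m + M * j))))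
        ≤ walkProb G ρ (m + M * r + M) (fun w => A w ∧ C (fun i => w (i + (m + M * r)))) := by
          rw [mul_add_one, ← add_assoc]
          exact walkProb_mono fun w h => ⟨fun j hj => h j (by omega), h r (by omega)⟩
      _ ≤ walkProb G ρ (m + M * r) A * (a + ε) :=
          walkProb_and_shift_le (dependsOn_forall_shift hC m r) hCp ρ
      _ ≤ (a ^ r + r * ε) * a + ε := by
          rw [mul_add]
          exact add_le_add (mul_le_mul_of_nonneg_right ih ha0) (mul_le_of_le_one_left hε hP1)
      _ ≤ a ^ (r + 1) + (r + 1 : ℕ) * ε := by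
          push_cast
          nlinarith [pow_succ a r,
            mul_le_mul_of_nonneg_left ha1 (mul_nonneg (Nat.cast_nonneg r) hε)]

lemma twoWalkProbFrom_eq_walkExp (ρ : V) (L : ℕ) (E : (ℕ → V) → (ℕ → V) → Prop) :
    twoWalkProbFrom G ρ L E = walkExp G ρ L (fun w => walkProb G ρ L (E w)) := by
  simp only [twoWalkProbFrom, walkExp, walkProb, mul_sum]
  refine sum_congr rfl fun γ _ => ?_
  split_ifs with h
  · simp only [ite_and, if_pos h, mul_ite, mul_zero]
  · simp [h]

/-- Two independent walks from a common uniform vertex are the two halves of a single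
uniform walk of length `L + L`, the first half read backwards from time `L`. -/
lemma sum_twoWalkProbFrom (hreg : G.IsRegularOfDegree d) (L : ℕ)
    (E : (ℕ → V) → (ℕ → V) → Prop) :
    ∑ ρ, twoWalkProbFrom G ρ L E =
      ∑ y, walkProb G y (L + L) (fun w => E (fun i => w (L - i)) (fun i => w (i + L))) := by
  calc ∑ ρ, twoWalkProbFrom G ρ L E
      = ∑ ρ, walkExp G ρ L (fun w => walkProb G (w 0) L (E w)) :=
        sum_congr rfl fun ρ _ => (twoWalkProbFrom_eq_walkExp ρ L E).trans
          (walkExp_congr fun w hw => by rw [hw])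
    _ = ∑ y, walkExp G y L (fun w => walkProb G (w L) L (E (fun i => w (L - i)))) :=
        (sum_walkExp_reverse hreg L _).symm
    _ = _ := sum_congr rfl fun y _ => (walkProb_markov (E := fun w => E (fun i => w (L - i)))
        (fun w w' h => by
          simp only
          congr 1
          funext i
          exact h _ (by simp)) y L).symm

end LazyWalk

section LocalCutPoint

variable {V : Type*} [DecidableEq V]

def IsLocalCutPoint (L : ℕ) (w : ℕ → V) (ℓ : ℕ) : Prop :=
  walkRange w (Icc (ℓ - L) ℓ) ∩ walkRange w (Icc (ℓ + 1) (ℓ + L)) = ∅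

lemma walkRange_shift (w : ℕ → V) (t a b : ℕ) :
    walkRange (fun i => w (i + t)) (Icc a b) = walkRange w (Icc (a + t) (b + t)) := by
  rw [walkRange, walkRange, ← image_add_right_Icc, image_image]
  rfl

lemma walkRange_reflect (w : ℕ → V) (L : ℕ) :
    walkRange (fun i => w (L - i)) (Icc 0 L) = walkRange w (Icc 0 L) := by
  have : (Icc 0 L).image (L - ·) = Icc 0 L := by
    ext i
    simp only [mem_image, mem_Icc]
    exact ⟨fun ⟨j, _, hj⟩ => by omega, fun hi => ⟨L - i, by omega, by omega⟩⟩
  rw [walkRange, walkRange]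
  conv_rhs => rw [← this, image_image]
  rfl

lemma isLocalCutPoint_shift {L ℓ : ℕ} (hL : L ≤ ℓ) (w : ℕ → V) (t : ℕ) :
    IsLocalCutPoint L (fun i => w (i + t)) ℓ ↔ IsLocalCutPoint L w (ℓ + t) := by
  rw [IsLocalCutPoint, IsLocalCutPoint, walkRange_shift, walkRange_shift,
    show ℓ - L + t = ℓ + t - L by omega, add_right_comm ℓ 1 t, add_right_comm ℓ L t]

lemma dependsOn_not_isLocalCutPoint (L ℓ : ℕ) :
    DependsOn (fun w : ℕ → V => ¬ IsLocalCutPoint L w ℓ) (Set.Iic (ℓ + L)) := by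
  intro w w' h
  have hrange : ∀ a b, b ≤ ℓ + L → walkRange w (Icc a b) = walkRange w' (Icc a b) :=
    fun a b hb => image_congr fun i hi => h i <| by
      simp only [coe_Icc, Set.mem_Icc, Set.mem_Iic] at hi ⊢
      omega
  simp only [IsLocalCutPoint, hrange _ _ (Nat.le_add_right ℓ L), hrange _ (ℓ + L) le_rfl]

end LocalCutPoint

section CutPointEstimates

variable {V : Type*} [Fintype V] [DecidableEq V] {G : SimpleGraph V} [DecidableRel G.Adj] {d : ℕ}

lemma qbar_eq (hreg : G.IsRegularOfDegree d) (L : ℕ) :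
    qbar G L = (Fintype.card V : ℝ)⁻¹ *
      ∑ y, walkProb G y (L + L) (fun w => ¬ IsLocalCutPoint L w L) := by
  rw [qbar, one_div, sum_twoWalkProbFrom hreg]
  congr 2 with y
  congr 1 with w
  rw [walkRange_reflect, walkRange_shift, IsLocalCutPoint, Nat.sub_self, add_comm 1 L,
    nonempty_iff_ne_empty]

lemma qbar_nonneg (hreg : G.IsRegularOfDegree d) (L : ℕ) : 0 ≤ qbar G L := by
  rw [qbar_eq hreg]
  exact mul_nonneg (by positivity) (sum_nonneg fun y _ => walkProb_nonneg (G := G) _ _ _)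

lemma qbar_le_one (hreg : G.IsRegularOfDegree d) (hd : 0 < d) (L : ℕ) : qbar G L ≤ 1 := by
  rw [qbar_eq hreg]
  calc (Fintype.card V : ℝ)⁻¹ * ∑ y, walkProb G y (L + L) (fun w => ¬ IsLocalCutPoint L w L)
      ≤ (Fintype.card V : ℝ)⁻¹ * ∑ _y : V, 1 := by
        gcongr with y
        exact walkProb_le_one (hreg.degree_pos hd) _ _ _
    _ ≤ 1 := by
        rw [sum_const, card_univ, nsmul_one]
        exact inv_mul_le_one_of_le₀ le_rfl (Nat.cast_nonneg _)

lemma walkProb_not_isLocalCutPoint_le (hconn : G.Connected) (hreg : G.IsRegularOfDegree d)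
    (hd : 0 < d) {q L : ℕ} (hL : q * tmix G ≤ L) (x : V) :
    walkProb G x (L + (L + L)) (fun w => ¬ IsLocalCutPoint L w (L + L)) ≤
      qbar G L + (4 ^ q)⁻¹ := by
  calc walkProb G x (L + (L + L)) (fun w => ¬ IsLocalCutPoint L w (L + L))
      = walkExp G x L (fun w => walkProb G (w L) (L + L) (fun u => ¬ IsLocalCutPoint L u L)) := by
        simp_rw [← isLocalCutPoint_shift le_rfl]
        exact walkProb_markov (G := G) (E := fun _ u => ¬ IsLocalCutPoint L u L) (T := L)
          (fun _ _ _ => rfl) x (L + L)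
    _ = ∑ y, lazyProb G L x y * walkProb G y (L + L) (fun u => ¬ IsLocalCutPoint L u L) :=
        walkExp_endpoint (G := G) x L
          (fun y => walkProb G y (L + L) (fun u => ¬ IsLocalCutPoint L u L))
    _ ≤ qbar G L + (4 ^ q)⁻¹ := by
        rw [qbar_eq hreg]
        exact sum_lazyProb_mul_le hconn hreg hd hL (fun y => walkProb_nonneg (G := G) _ _ _)
          (fun y => walkProb_le_one (hreg.degree_pos hd) _ _ _) x

lemma walkProb_forall_not_isLocalCutPoint_le (hconn : G.Connected)
    (hreg : G.IsRegularOfDegree d) (hd : 0 < d) {q L k s m n : ℕ} (hL : q * tmix G ≤ L)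
    (hks : k * (3 * L) ≤ s) (hn : m + s ≤ n) (ρ : V) :
    walkProb G ρ n (fun w => ¬ ∃ ℓ ∈ Icc (m + L) (m + s - L), IsLocalCutPoint L w ℓ) ≤
      qbar G L ^ k + k * (4 ^ q)⁻¹ := by
  have hdeg := hreg.degree_pos hd
  have h3L : L + (L + L) = 3 * L := by ring
  have hC := dependsOn_not_isLocalCutPoint (V := V) L (L + L)
  rw [show L + L + L = 3 * L by ring] at hC
  calc walkProb G ρ n (fun w => ¬ ∃ ℓ ∈ Icc (m + L) (m + s - L), IsLocalCutPoint L w ℓ)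
      ≤ walkProb G ρ n
          (fun w => ∀ j < k, ¬ IsLocalCutPoint L (fun i => w (i + (m + 3 * L * j))) (L + L)) := by
        refine walkProb_mono fun w hw j hj => ?_
        rw [isLocalCutPoint_shift (Nat.le_add_right L L)]
        have : 3 * L * (j + 1) ≤ s := (Nat.mul_le_mul_left _ hj).trans ((mul_comm _ _).trans_le hks)
        rw [mul_add_one] at this
        exact fun hcut => hw ⟨_, mem_Icc.2 ⟨by omega, by omega⟩, hcut⟩
    _ = walkProb G ρ (m + 3 * L * k)
          (fun w => ∀ j < k, ¬ IsLocalCutPoint L (fun i => w (i + (m + 3 * L * j))) (L + L)) :=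
        walkProb_eq_of_dependsOn hdeg (dependsOn_forall_shift hC m k) (by nlinarith) ρ
    _ ≤ qbar G L ^ k + k * (4 ^ q)⁻¹ :=
        walkProb_forall_shift_le hdeg hC (qbar_nonneg hreg L) (qbar_le_one hreg hd L)
          (by positivity) (fun x => h3L ▸ walkProb_not_isLocalCutPoint_le hconn hreg hd hL x) ρ m k

end CutPointEstimates

lemma natCast_div_mul_inv_pow_le (s q : ℕ) {s' : ℕ} (hs' : 0 < s') :
    ((s / (6 * s') : ℕ) : ℝ) * ((4 : ℝ) ^ q)⁻¹ ≤ s / (3 * 4 ^ q * s') := by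
  have hk : ((s / (6 * s') : ℕ) : ℝ) ≤ s / (6 * s') := by exact_mod_cast Nat.cast_div_le
  calc ((s / (6 * s') : ℕ) : ℝ) * ((4 : ℝ) ^ q)⁻¹ ≤ s / (6 * s') * ((4 : ℝ) ^ q)⁻¹ := by gcongr
    _ = s / (3 * 4 ^ q * s') / 2 := by field_simp; ring
    _ ≤ s / (3 * 4 ^ q * s') := div_le_self (by positivity) one_le_two

theorem existence_of_local_cut_points_general
    (G : SimpleGraph V) [DecidableRel G.Adj] (hconn : G.Connected)
    (hcard : 2 ≤ Fintype.card V) (d : ℕ) (hreg : G.IsRegularOfDegree d)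
    (s s' N q : ℕ) (hNs : s ≤ N)
    (hq : q * tmix G + 1 ≤ 2 * s') (ρ : V) :
    1 - ((N - s + 1 : ℕ) : ℝ) *
        ((qbar G (2 * s')) ^ (s / (6 * s')) + (s : ℝ) / (3 * 4 ^ q * (s' : ℝ))) ≤
      walkProb G ρ (N + 2 * s') (fun w =>
        ∀ m, m ≤ N - s →
          ∃ ℓ ∈ Finset.Icc (m + 2 * s') (m + s - 2 * s'),
            walkRange w (Finset.Icc (ℓ - 2 * s') ℓ) ∩
              walkRange w (Finset.Icc (ℓ + 1) (ℓ + 2 * s')) = ∅) := by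
  have : Nontrivial V := Fintype.one_lt_card_iff_nontrivial.1 hcard
  have hdeg : ∀ x, 0 < G.degree x := fun x => hconn.preconnected.degree_pos_of_nontrivial x
  have hd : 0 < d := hreg.degree_eq ρ ▸ hdeg ρ
  have hks : s / (6 * s') * (3 * (2 * s')) ≤ s := by
    rw [show 3 * (2 * s') = 6 * s' by ring]
    exact Nat.div_mul_le_self s (6 * s')
  have herr := natCast_div_mul_inv_pow_le s q (show 0 < s' by omega)
  calc 1 - ((N - s + 1 : ℕ) : ℝ) *
        ((qbar G (2 * s')) ^ (s / (6 * s')) + (s : ℝ) / (3 * 4 ^ q * (s' : ℝ)))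
      ≤ 1 - ∑ m ∈ Iic (N - s), walkProb G ρ (N + 2 * s') (fun w =>
          ¬ ∃ ℓ ∈ Icc (m + 2 * s') (m + s - 2 * s'), IsLocalCutPoint (2 * s') w ℓ) := by
        rw [← Nat.card_Iic, ← nsmul_eq_mul, ← sum_const]
        gcongr with m hm
        exact (walkProb_forall_not_isLocalCutPoint_le hconn hreg hd (q := q) (by omega) hks
          (by rw [mem_Iic] at hm; omega) ρ).trans (by gcongr)
    _ ≤ _ := (one_sub_sum_le_walkProb_forall hdeg _ ρ _ _).trans
        (walkProb_mono fun w h m hm => h m (mem_Iic.2 hm))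

/-- Existence of local cut points in every window of length `s`. -/
theorem existence_of_local_cut_points
    (G : SimpleGraph V) [DecidableRel G.Adj] (hconn : G.Connected)
    (hcard : 2 ≤ Fintype.card V) (d : ℕ) (hreg : G.IsRegularOfDegree d)
    (s s' N q : ℕ) (hNs : s ≤ N) (hss' : 6 * s' ≤ s)
    (hq : q * tmix G + 1 ≤ 2 * s') (ρ : V) :
    1 - ((N - s + 1 : ℕ) : ℝ) *
        ((qbar G (2 * s')) ^ (s / (6 * s')) + (s : ℝ) / (3 * 4 ^ q * (s' : ℝ))) ≤
      walkProb G ρ (N + 2 * s') (fun w =>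
        ∀ m, m ≤ N - s →
          ∃ ℓ ∈ Finset.Icc (m + 2 * s') (m + s - 2 * s'),
            walkRange w (Finset.Icc (ℓ - 2 * s') ℓ) ∩
              walkRange w (Finset.Icc (ℓ + 1) (ℓ + 2 * s')) = ∅) :=
  existence_of_local_cut_points_general G hconn hcard d hreg s s' N q hNs hq ρ
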